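/- Let p > 0 and suppose in addition that s is bounded, i.e. sup_{y∈ℝ} s(y) = α < ∞ and inf_{y∈ℝ} s(y) = β > -∞, and that ∫_ℝ s(y) ν(dy) = 0. Then ∫_0^∞ z^{p-1}(ν₊(z)+ν₋(z)) dz < ∞ if and only if ∫_ℝ |y|^p ν(dy) < ∞. (This is the analytic content of the paper's Theorem for diffusions whose natural-scale state space is a finite interval: ν₊ and ν₋ are the tail distribution functions of the supremum and of the negative of the infimum of the diffusion stopped by the optimal embedding, so the conclusion says the embedding is an H^p-embedding exactly when ν has a finite p-th moment.) -/

import Mathlib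

open MeasureTheory Set Filter
open scoped ENNReal NNReal Classical

/-- The function `c_Y` of the paper: `c_Y y = ∫_{[0,∞)} min(s(y),s(w)) ν(dw)` for `y ≥ 0`,
`c_Y y = ∫_{(-∞,0)} min(|s(y)|,|s(w)|) ν(dw)` for `y < 0`. -/
noncomputable def cY (s : ℝ → ℝ) (ν : Measure ℝ) (y : ℝ) : ℝ :=
  if 0 ≤ y then ∫ w in Ici (0 : ℝ), min (s y) (s w) ∂ν
  else ∫ w in Iio (0 : ℝ), min |s y| |s w| ∂ν

/-- The slope `(c_Y(z) - c_Y(-y))/(s(z) - s(-y))` in the definition of `ζ₊, ρ₊`. -/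
noncomputable def slopeYPlus (s : ℝ → ℝ) (ν : Measure ℝ) (z y : ℝ) : ℝ :=
  (cY s ν z - cY s ν (-y)) / (s z - s (-y))

/-- The slope `(c_Y(y) - c_Y(-z))/(s(y) - s(-z))` in the definition of `ζ₋, ρ₋`. -/
noncomputable def slopeYMinus (s : ℝ → ℝ) (ν : Measure ℝ) (z y : ℝ) : ℝ :=
  (cY s ν y - cY s ν (-z)) / (s y - s (-z))

/-- The set of `y > 0` attaining the infimum in the definition of `ρ₊(z)`. -/
def argYPlus (s : ℝ → ℝ) (ν : Measure ℝ) (z : ℝ) : Set ℝ :=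
  {y | 0 < y ∧ ∀ x, 0 < x → slopeYPlus s ν z y ≤ slopeYPlus s ν z x}

/-- The set of `y > 0` attaining the supremum in the definition of `ρ₋(z)`. -/
def argYMinus (s : ℝ → ℝ) (ν : Measure ℝ) (z : ℝ) : Set ℝ :=
  {y | 0 < y ∧ ∀ x, 0 < x → slopeYMinus s ν z x ≤ slopeYMinus s ν z y}

/-- `ζ₊(z) = -inf_{y>0} (c_Y(z)-c_Y(-y))/(s(z)-s(-y))` if attained, `0` otherwise. -/
noncomputable def zetaPlus (s : ℝ → ℝ) (ν : Measure ℝ) (z : ℝ) : ℝ :=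
  if (argYPlus s ν z).Nonempty then -sInf (slopeYPlus s ν z '' Ioi 0) else 0

/-- `ζ₋(z) = sup_{y>0} (c_Y(y)-c_Y(-z))/(s(y)-s(-z))` if attained, `0` otherwise. -/
noncomputable def zetaMinus (s : ℝ → ℝ) (ν : Measure ℝ) (z : ℝ) : ℝ :=
  if (argYMinus s ν z).Nonempty then sSup (slopeYMinus s ν z '' Ioi 0) else 0

/-- `ν₊(z) = ζ₊(z) + ν([z,∞))`, the tail distribution function of the supremum of the
stopped process for the optimal embedding. -/
noncomputable def nuPlus (s : ℝ → ℝ) (ν : Measure ℝ) (z : ℝ) : ℝ :=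
  zetaPlus s ν z + (ν (Ici z)).toReal

/-- `ν₋(z) = ν((-∞,-z]) + ζ₋(z)`, the tail distribution function of minus the infimum of
the stopped process for the optimal embedding. -/
noncomputable def nuMinus (s : ℝ → ℝ) (ν : Measure ℝ) (z : ℝ) : ℝ :=
  (ν (Iic (-z))).toReal + zetaMinus s ν z

/-!
Since `s` is bounded and `∫ s dν = 0`, `c_Y` stays below `m = ∫_{[0,∞)} s dν = ∫_{(-∞,0)} |s| dν`,
with `m - c_Y(z) ≤ M ν([z,∞))` and `m - c_Y(-z) ≤ M ν((-∞,-z])` for `|s| ≤ M`. Letting `y → ∞` in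
the extremal slopes gives `0 ≤ ζ± ≤ 1`, and the same bounds give `ζ₊(z) ≤ M ν([z,∞)) / s(z)` and
`ζ₋(z) ≤ M ν((-∞,-z]) / |s(-z)|`. So `ν₊ + ν₋` is bounded near `0` and comparable with
`ν(|y| ≥ z)` for `z ≥ 1`, and the layer-cake formula `∫ |y|^p dν = p ∫_0^∞ z^(p-1) ν(|y| ≥ z) dz`
concludes.
-/

open Topology

lemma tendsto_measureReal_Ici_atTop (ν : Measure ℝ) [IsFiniteMeasure ν] :
    Tendsto (fun y => ν.real (Ici y)) atTop (𝓝 0) := by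
  have h := tendsto_measure_iInter_atTop (μ := ν) (fun y : ℝ => measurableSet_Ici.nullMeasurableSet)
    (fun _ _ => Ici_subset_Ici.2) ⟨0, measure_ne_top ν _⟩
  have hempty : ⋂ y : ℝ, Ici y = ∅ :=
    eq_empty_of_forall_notMem fun x hx => (lt_add_one x).not_ge (mem_iInter.1 hx (x + 1))
  rw [hempty, measure_empty] at h
  exact (ENNReal.tendsto_toReal ENNReal.zero_ne_top).comp h

lemma tendsto_measureReal_Iic_atBot (ν : Measure ℝ) [IsFiniteMeasure ν] :
    Tendsto (fun y => ν.real (Iic y)) atBot (𝓝 0) := by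
  have h := tendsto_measure_iInter_atBot (μ := ν) (fun y : ℝ => measurableSet_Iic.nullMeasurableSet)
    (fun _ _ => Iic_subset_Iic.2) ⟨0, measure_ne_top ν _⟩
  rw [iInter_Iic_eq_empty_iff.2 (by simp [not_bddBelow_univ]), measure_empty] at h
  exact (ENNReal.tendsto_toReal ENNReal.zero_ne_top).comp h

lemma measureReal_setOf_le_abs {ν : Measure ℝ} [IsFiniteMeasure ν] {z : ℝ} (hz : 0 < z) :
    ν.real {y | z ≤ |y|} = ν.real (Ici z) + ν.real (Iic (-z)) := by
  have hunion : {y : ℝ | z ≤ |y|} = Ici z ∪ Iic (-z) := by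
    ext y; simp only [mem_ofPred_eq, mem_union, mem_Ici, mem_Iic, le_abs, le_neg]
  rw [hunion, measureReal_union _ measurableSet_Iic]
  exact Set.disjoint_left.2 fun y hy hy' => by simp only [mem_Ici, mem_Iic] at hy hy'; linarith

lemma lintegral_rpow_abs_lt_top_iff (ν : Measure ℝ) [IsFiniteMeasure ν] {p : ℝ} (hp : 0 < p) :
    ∫⁻ y, ENNReal.ofReal (|y| ^ p) ∂ν < ⊤ ↔
      ∫⁻ z in Ioi 0, ENNReal.ofReal (z ^ (p - 1) * ν.real {y | z ≤ |y|}) < ⊤ := by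
  have hintegrand : ∀ z : ℝ, ν {y | z ≤ |y|} * ENNReal.ofReal (z ^ (p - 1)) =
      ENNReal.ofReal (z ^ (p - 1) * ν.real {y | z ≤ |y|}) := fun z => by
    rw [ENNReal.ofReal_mul' measureReal_nonneg, ofReal_measureReal, mul_comm]
  rw [lintegral_rpow_eq_lintegral_meas_le_mul ν (ae_of_all _ abs_nonneg)
    measurable_abs.aemeasurable hp]
  simp only [hintegrand]
  exact ⟨fun h => ENNReal.lt_top_of_mul_ne_top_right h.ne (by simpa using hp),
    ENNReal.mul_lt_top ENNReal.ofReal_lt_top⟩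

lemma lintegral_Ioi_rpow_mul_lt_top_iff_of_comparable {p B C : ℝ} {f g : ℝ → ℝ} (hp : 0 < p) (hC : 0 ≤ C)
    (hgf : ∀ z, 0 < z → g z ≤ f z) (hfB : ∀ z, 0 < z → f z ≤ B)
    (hfg : ∀ z, 1 < z → f z ≤ C * g z) :
    ∫⁻ z in Ioi 0, ENNReal.ofReal (z ^ (p - 1) * f z) < ⊤ ↔
      ∫⁻ z in Ioi 0, ENNReal.ofReal (z ^ (p - 1) * g z) < ⊤ := by
  have hpow : ∀ z : ℝ, 0 < z → 0 ≤ z ^ (p - 1) := fun z hz => Real.rpow_nonneg hz.le _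
  constructor
  · refine lt_of_le_of_lt (setLIntegral_mono' measurableSet_Ioi fun z hz => ?_)
    exact ENNReal.ofReal_le_ofReal (mul_le_mul_of_nonneg_left (hgf z hz) (hpow z hz))
  · intro hg
    have hnear : ∫⁻ z in Ioc 0 1, ENNReal.ofReal (z ^ (p - 1) * f z) < ⊤ := by
      have hint : IntegrableOn (fun z : ℝ => z ^ (p - 1) * B) (Ioc 0 1) :=
        ((intervalIntegrable_iff_integrableOn_Ioc_of_le zero_le_one).1
          (intervalIntegral.intervalIntegrable_rpow' (by linarith))).mul_const B
      refine lt_of_le_of_lt (setLIntegral_mono' measurableSet_Ioc fun z hz => ?_)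
        hint.setLIntegral_lt_top
      exact ENNReal.ofReal_le_ofReal (mul_le_mul_of_nonneg_left (hfB z hz.1) (hpow z hz.1))
    have hfar : ∫⁻ z in Ioi 1, ENNReal.ofReal (z ^ (p - 1) * f z) < ⊤ := by
      calc ∫⁻ z in Ioi 1, ENNReal.ofReal (z ^ (p - 1) * f z)
          ≤ ∫⁻ z in Ioi 1, ENNReal.ofReal C * ENNReal.ofReal (z ^ (p - 1) * g z) := by
            refine setLIntegral_mono' measurableSet_Ioi fun z hz => ?_
            rw [← ENNReal.ofReal_mul hC, mul_left_comm]
            exact ENNReal.ofReal_le_ofReal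
              (mul_le_mul_of_nonneg_left (hfg z hz) (hpow z (zero_lt_one.trans hz)))
        _ ≤ ENNReal.ofReal C * ∫⁻ z in Ioi 0, ENNReal.ofReal (z ^ (p - 1) * g z) := by
            rw [lintegral_const_mul' _ _ ENNReal.ofReal_ne_top]
            gcongr
            exact zero_le_one
        _ < ⊤ := ENNReal.mul_lt_top ENNReal.ofReal_lt_top hg
    rw [← Ioc_union_Ioi_eq_Ioi (zero_le_one' ℝ)]
    exact (lintegral_union_le _ _ _).trans_lt (ENNReal.add_lt_top.2 ⟨hnear, hfar⟩)

section ScaleFunction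

variable {s : ℝ → ℝ} {ν : Measure ℝ} {M y z : ℝ}

lemma Monotone.integrable_of_abs_le [IsFiniteMeasure ν] (hmono : Monotone s)
    (hM : ∀ w, |s w| ≤ M) : Integrable s ν :=
  .of_bound hmono.measurable.aestronglyMeasurable M (ae_of_all _ hM)

lemma cY_of_nonneg (hy : 0 ≤ y) : cY s ν y = ∫ w in Ici 0, min (s y) (s w) ∂ν := if_pos hy

lemma cY_of_neg (hy : y < 0) : cY s ν y = ∫ w in Iio 0, min |s y| |s w| ∂ν := if_neg hy.not_ge

lemma cY_nonneg (hmono : Monotone s) (hs0 : s 0 = 0) (y : ℝ) : 0 ≤ cY s ν y := by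
  rcases le_or_gt 0 y with hy | hy
  · rw [cY_of_nonneg hy]
    exact setIntegral_nonneg measurableSet_Ici fun w hw => le_min (hs0 ▸ hmono hy) (hs0 ▸ hmono hw)
  · rw [cY_of_neg hy]
    exact setIntegral_nonneg measurableSet_Iio fun w _ => le_min (abs_nonneg _) (abs_nonneg _)

lemma cY_le_abs [IsProbabilityMeasure ν] (hmono : Monotone s) (hs0 : s 0 = 0) (y : ℝ) :
    cY s ν y ≤ |s y| := by
  have hbound : ∀ {S : Set ℝ} {f : ℝ → ℝ}, (∀ w ∈ S, |f w| ≤ |s y|) →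
      ∫ w in S, f w ∂ν ≤ |s y| := fun {S f} hf => by
    have h := norm_setIntegral_le_of_norm_le_const (μ := ν) (measure_lt_top _ S)
      fun w hw => (Real.norm_eq_abs (f w)).trans_le (hf w hw)
    rw [Real.norm_eq_abs] at h
    exact (le_abs_self _).trans (h.trans (mul_le_of_le_one_right (abs_nonneg _) measureReal_le_one))
  rcases le_or_gt 0 y with hy | hy
  · rw [cY_of_nonneg hy]
    refine hbound fun w hw => ?_
    rw [abs_of_nonneg (le_min (hs0 ▸ hmono hy) (hs0 ▸ hmono hw))]
    exact (min_le_left _ _).trans (le_abs_self _)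
  · rw [cY_of_neg hy]
    refine hbound fun w _ => ?_
    rw [abs_of_nonneg (le_min (abs_nonneg _) (abs_nonneg _))]
    exact min_le_left _ _

lemma setIntegral_Iio_abs_eq_setIntegral_Ici (hmono : Monotone s) (hs0 : s 0 = 0)
    (hint : Integrable s ν) (hmean : ∫ w, s w ∂ν = 0) :
    ∫ w in Iio 0, |s w| ∂ν = ∫ w in Ici 0, s w ∂ν := by
  have hsplit := integral_add_compl (measurableSet_Iio (a := (0 : ℝ))) hint
  rw [compl_Iio, hmean] at hsplit
  rw [setIntegral_congr_fun measurableSet_Iio fun w hw => abs_of_nonpos (hs0 ▸ hmono (le_of_lt hw)),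
    integral_neg]
  linarith

lemma cY_le_setIntegral_Ici (hmono : Monotone s) (hs0 : s 0 = 0) (hint : Integrable s ν)
    (hmean : ∫ w, s w ∂ν = 0) (y : ℝ) : cY s ν y ≤ ∫ w in Ici 0, s w ∂ν := by
  rcases le_or_gt 0 y with hy | hy
  · rw [cY_of_nonneg hy]
    exact integral_mono_of_nonneg (ae_restrict_of_forall_mem measurableSet_Ici fun w hw =>
      le_min (hs0 ▸ hmono hy : 0 ≤ s y) (hs0 ▸ hmono hw : 0 ≤ s w)) hint.integrableOn
      (ae_of_all _ fun w => min_le_right _ _)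
  · rw [cY_of_neg hy, ← setIntegral_Iio_abs_eq_setIntegral_Ici hmono hs0 hint hmean]
    exact integral_mono_of_nonneg (ae_of_all _ fun w => le_min (abs_nonneg _) (abs_nonneg _))
      hint.abs.integrableOn (ae_of_all _ fun w => min_le_right _ _)

lemma setIntegral_Ici_sub_cY_le [IsFiniteMeasure ν] (hmono : Monotone s) (hs0 : s 0 = 0)
    (hint : Integrable s ν) (hM : ∀ w, s w ≤ M) (hz : 0 ≤ z) :
    ∫ w in Ici 0, s w ∂ν - cY s ν z ≤ M * ν.real (Ici z) := by
  have hmin : Integrable (fun w => min (s z) (s w)) ν := (integrable_const (s z)).inf hint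
  rw [cY_of_nonneg hz, ← integral_sub hint.integrableOn hmin.integrableOn]
  calc ∫ w in Ici 0, (s w - min (s z) (s w)) ∂ν
      ≤ ∫ w in Ici 0, (Ici z).indicator (fun _ => M) w ∂ν := by
        refine setIntegral_mono_on (hint.sub hmin).integrableOn
          ((integrable_const M).indicator measurableSet_Ici).integrableOn measurableSet_Ici
          fun w hw => ?_
        rcases le_or_gt z w with hzw | hwz
        · rw [indicator_of_mem (mem_Ici.2 hzw)]
          linarith [hM w, le_min (hs0 ▸ hmono hz : 0 ≤ s z) (hs0 ▸ hmono hw)]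
        · rw [indicator_of_notMem (notMem_Ici.2 hwz), min_eq_right (hmono hwz.le), sub_self]
    _ = M * ν.real (Ici z) := by
        rw [setIntegral_indicator measurableSet_Ici, inter_eq_right.2 (Ici_subset_Ici.2 hz),
          setIntegral_const, smul_eq_mul, mul_comm]

lemma setIntegral_Ici_sub_cY_neg_le [IsFiniteMeasure ν] (hmono : Monotone s) (hs0 : s 0 = 0)
    (hint : Integrable s ν) (hmean : ∫ w, s w ∂ν = 0) (hM : ∀ w, -M ≤ s w) (hy : 0 < y) :
    ∫ w in Ici 0, s w ∂ν - cY s ν (-y) ≤ M * ν.real (Iic (-y)) := by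
  have hy' : -y < 0 := neg_neg_of_pos hy
  have hmin : Integrable (fun w => min |s (-y)| |s w|) ν := (integrable_const _).inf hint.abs
  rw [← setIntegral_Iio_abs_eq_setIntegral_Ici hmono hs0 hint hmean, cY_of_neg hy',
    ← integral_sub hint.abs.integrableOn hmin.integrableOn]
  calc ∫ w in Iio 0, (|s w| - min |s (-y)| |s w|) ∂ν
      ≤ ∫ w in Iio 0, (Iic (-y)).indicator (fun _ => M) w ∂ν := by
        refine setIntegral_mono_on (hint.abs.sub hmin).integrableOn
          ((integrable_const M).indicator measurableSet_Iic).integrableOn measurableSet_Iio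
          fun w hw => ?_
        have hsw : s w ≤ 0 := hs0 ▸ hmono (le_of_lt hw)
        rcases le_or_gt w (-y) with hwy | hyw
        · rw [indicator_of_mem (mem_Iic.2 hwy)]
          linarith [hM w, abs_of_nonpos hsw, le_min (abs_nonneg (s (-y))) (abs_nonneg (s w))]
        · have habs : |s w| ≤ |s (-y)| := by
            rw [abs_of_nonpos hsw, abs_of_nonpos (hmono hyw.le |>.trans hsw)]
            exact neg_le_neg (hmono hyw.le)
          rw [indicator_of_notMem (notMem_Iic.2 hyw), min_eq_right habs, sub_self]
    _ = M * ν.real (Iic (-y)) := by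
        rw [setIntegral_indicator measurableSet_Iic, inter_eq_right.2 (Iic_subset_Iio.2 hy'),
          setIntegral_const, smul_eq_mul, mul_comm]

lemma neg_one_le_slopeYPlus [IsProbabilityMeasure ν] (hmono : StrictMono s) (hs0 : s 0 = 0)
    (hz : 0 ≤ z) (hy : 0 < y) : -1 ≤ slopeYPlus s ν z y := by
  have hsy : s (-y) < 0 := hs0 ▸ hmono (neg_neg_of_pos hy)
  have hsz : 0 ≤ s z := hs0 ▸ hmono.monotone hz
  rw [slopeYPlus, le_div_iff₀ (by linarith)]
  have hcY := cY_le_abs (ν := ν) hmono.monotone hs0 (-y)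
  rw [abs_of_neg hsy] at hcY
  linarith [cY_nonneg (ν := ν) hmono.monotone hs0 z]

lemma slopeYMinus_le_one [IsProbabilityMeasure ν] (hmono : StrictMono s) (hs0 : s 0 = 0)
    (hz : 0 < z) (hy : 0 ≤ y) : slopeYMinus s ν z y ≤ 1 := by
  have hsz : s (-z) < 0 := hs0 ▸ hmono (neg_neg_of_pos hz)
  have hsy : 0 ≤ s y := hs0 ▸ hmono.monotone hy
  rw [slopeYMinus, div_le_one (by linarith)]
  have hcY := cY_le_abs (ν := ν) hmono.monotone hs0 y
  rw [abs_of_nonneg hsy] at hcY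
  linarith [cY_nonneg (ν := ν) hmono.monotone hs0 (-z)]

lemma zetaPlus_eq_zero_or_exists (s : ℝ → ℝ) (ν : Measure ℝ) (z : ℝ) :
    zetaPlus s ν z = 0 ∨ ∃ y ∈ argYPlus s ν z, zetaPlus s ν z = -slopeYPlus s ν z y := by
  unfold zetaPlus
  split_ifs with h
  · obtain ⟨y, hy⟩ := h
    exact Or.inr ⟨y, hy, congrArg _ (IsLeast.csInf_eq ⟨mem_image_of_mem _ hy.1,
      forall_mem_image.2 hy.2⟩)⟩
  · exact Or.inl rfl

lemma zetaMinus_eq_zero_or_exists (s : ℝ → ℝ) (ν : Measure ℝ) (z : ℝ) :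
    zetaMinus s ν z = 0 ∨ ∃ y ∈ argYMinus s ν z, zetaMinus s ν z = slopeYMinus s ν z y := by
  unfold zetaMinus
  split_ifs with h
  · obtain ⟨y, hy⟩ := h
    exact Or.inr ⟨y, hy, IsGreatest.csSup_eq ⟨mem_image_of_mem _ hy.1,
      forall_mem_image.2 hy.2⟩⟩
  · exact Or.inl rfl

lemma zetaPlus_le_one [IsProbabilityMeasure ν] (hmono : StrictMono s) (hs0 : s 0 = 0)
    (hz : 0 < z) : zetaPlus s ν z ≤ 1 := by
  obtain h | ⟨y, hy, h⟩ := zetaPlus_eq_zero_or_exists s ν z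
  · rw [h]; exact zero_le_one
  · rw [h]; linarith [neg_one_le_slopeYPlus (ν := ν) hmono hs0 hz.le hy.1]

lemma zetaMinus_le_one [IsProbabilityMeasure ν] (hmono : StrictMono s) (hs0 : s 0 = 0)
    (hz : 0 < z) : zetaMinus s ν z ≤ 1 := by
  obtain h | ⟨y, hy, h⟩ := zetaMinus_eq_zero_or_exists s ν z
  · rw [h]; exact zero_le_one
  · rw [h]; exact slopeYMinus_le_one hmono hs0 hz hy.1.le

lemma zetaPlus_nonneg [IsProbabilityMeasure ν] (hmono : StrictMono s) (hs0 : s 0 = 0)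
    (hM : ∀ w, |s w| ≤ M) (hmean : ∫ w, s w ∂ν = 0) (hz : 0 < z) : 0 ≤ zetaPlus s ν z := by
  obtain h | ⟨y₀, hy₀, h⟩ := zetaPlus_eq_zero_or_exists s ν z
  · exact h.ge
  rw [h, neg_nonneg]
  by_contra! hpos
  have hint := hmono.monotone.integrable_of_abs_le (ν := ν) hM
  have hsz : 0 < s z := hs0 ▸ hmono hz
  have htail : Tendsto (fun y => M * ν.real (Iic (-y))) atTop (𝓝 0) := by
    simpa using ((tendsto_measureReal_Iic_atBot ν).comp tendsto_neg_atTop_atBot).const_mul M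
  have hbound : ∀ y, 0 < y → slopeYPlus s ν z y₀ * s z ≤ M * ν.real (Iic (-y)) := by
    intro y hy
    have hsy : s (-y) < 0 := hs0 ▸ hmono (neg_neg_of_pos hy)
    have hslope := (le_div_iff₀ (by linarith : 0 < s z - s (-y))).1 (hy₀.2 y hy)
    nlinarith [mul_pos hpos (neg_pos.2 hsy), cY_le_setIntegral_Ici hmono.monotone hs0 hint hmean z,
      setIntegral_Ici_sub_cY_neg_le hmono.monotone hs0 hint hmean
        (fun w => (abs_le.1 (hM w)).1) hy]
  exact (mul_pos hpos hsz).not_ge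
    (ge_of_tendsto htail ((eventually_gt_atTop 0).mono hbound))

lemma zetaMinus_nonneg [IsProbabilityMeasure ν] (hmono : StrictMono s) (hs0 : s 0 = 0)
    (hM : ∀ w, |s w| ≤ M) (hmean : ∫ w, s w ∂ν = 0) (hz : 0 < z) : 0 ≤ zetaMinus s ν z := by
  obtain h | ⟨y₀, hy₀, h⟩ := zetaMinus_eq_zero_or_exists s ν z
  · exact h.ge
  rw [h]
  by_contra! hneg
  have hint := hmono.monotone.integrable_of_abs_le (ν := ν) hM
  have hsz : s (-z) < 0 := hs0 ▸ hmono (neg_neg_of_pos hz)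
  have htail : Tendsto (fun y => M * ν.real (Ici y)) atTop (𝓝 0) := by
    simpa using (tendsto_measureReal_Ici_atTop ν).const_mul M
  have hbound : ∀ y, 0 < y → slopeYMinus s ν z y₀ * s (-z) ≤ M * ν.real (Ici y) := by
    intro y hy
    have hsy : 0 < s y := hs0 ▸ hmono hy
    have hslope := (div_le_iff₀ (by linarith : 0 < s y - s (-z))).1 (hy₀.2 y hy)
    nlinarith [mul_pos (neg_pos.2 hneg) hsy,
      cY_le_setIntegral_Ici hmono.monotone hs0 hint hmean (-z),
      setIntegral_Ici_sub_cY_le hmono.monotone hs0 hint (fun w => (abs_le.1 (hM w)).2) hy.le]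
  exact (mul_pos_of_neg_of_neg hneg hsz).not_ge
    (ge_of_tendsto htail ((eventually_gt_atTop 0).mono hbound))

lemma zetaPlus_le [IsProbabilityMeasure ν] (hmono : StrictMono s) (hs0 : s 0 = 0)
    (hM : ∀ w, |s w| ≤ M) (hmean : ∫ w, s w ∂ν = 0) (hz : 0 < z) :
    zetaPlus s ν z ≤ M * ν.real (Ici z) / s z := by
  have hint := hmono.monotone.integrable_of_abs_le (ν := ν) hM
  have hsz : 0 < s z := hs0 ▸ hmono hz
  have htail : 0 ≤ M * ν.real (Ici z) :=
    mul_nonneg ((abs_nonneg _).trans (hM 0)) measureReal_nonneg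
  obtain h | ⟨y₀, hy₀, h⟩ := zetaPlus_eq_zero_or_exists s ν z
  · rw [h]; exact div_nonneg htail hsz.le
  have hsy : s (-y₀) < 0 := hs0 ▸ hmono (neg_neg_of_pos hy₀.1)
  rw [h, slopeYPlus, ← neg_div, neg_sub]
  refine div_le_div₀ htail ?_ hsz (by linarith)
  linarith [cY_le_setIntegral_Ici hmono.monotone hs0 hint hmean (-y₀),
    setIntegral_Ici_sub_cY_le hmono.monotone hs0 hint (fun w => (abs_le.1 (hM w)).2) hz.le]

lemma zetaMinus_le [IsProbabilityMeasure ν] (hmono : StrictMono s) (hs0 : s 0 = 0)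
    (hM : ∀ w, |s w| ≤ M) (hmean : ∫ w, s w ∂ν = 0) (hz : 0 < z) :
    zetaMinus s ν z ≤ M * ν.real (Iic (-z)) / -s (-z) := by
  have hint := hmono.monotone.integrable_of_abs_le (ν := ν) hM
  have hsz : s (-z) < 0 := hs0 ▸ hmono (neg_neg_of_pos hz)
  have htail : 0 ≤ M * ν.real (Iic (-z)) :=
    mul_nonneg ((abs_nonneg _).trans (hM 0)) measureReal_nonneg
  obtain h | ⟨y₀, hy₀, h⟩ := zetaMinus_eq_zero_or_exists s ν z
  · rw [h]; exact div_nonneg htail (by linarith)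
  have hsy : 0 < s y₀ := hs0 ▸ hmono hy₀.1
  rw [h, slopeYMinus]
  refine div_le_div₀ htail ?_ (by linarith) (by linarith)
  linarith [cY_le_setIntegral_Ici hmono.monotone hs0 hint hmean y₀,
    setIntegral_Ici_sub_cY_neg_le hmono.monotone hs0 hint hmean
      (fun w => (abs_le.1 (hM w)).1) hz]

lemma measureReal_le_nuPlus_add_nuMinus [IsProbabilityMeasure ν] (hmono : StrictMono s)
    (hs0 : s 0 = 0) (hM : ∀ w, |s w| ≤ M) (hmean : ∫ w, s w ∂ν = 0) (hz : 0 < z) :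
    ν.real {y | z ≤ |y|} ≤ nuPlus s ν z + nuMinus s ν z := by
  rw [measureReal_setOf_le_abs hz]
  simp only [nuPlus, nuMinus, ← measureReal_def]
  linarith [zetaPlus_nonneg hmono hs0 hM hmean hz, zetaMinus_nonneg hmono hs0 hM hmean hz]

lemma nuPlus_add_nuMinus_le_four [IsProbabilityMeasure ν] (hmono : StrictMono s)
    (hs0 : s 0 = 0) (hz : 0 < z) : nuPlus s ν z + nuMinus s ν z ≤ 4 := by
  simp only [nuPlus, nuMinus, ← measureReal_def]
  linarith [zetaPlus_le_one (ν := ν) hmono hs0 hz, zetaMinus_le_one (ν := ν) hmono hs0 hz,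
    measureReal_le_one (μ := ν) (s := Ici z), measureReal_le_one (μ := ν) (s := Iic (-z))]

lemma nuPlus_add_nuMinus_le_mul [IsProbabilityMeasure ν] (hmono : StrictMono s)
    (hs0 : s 0 = 0) (hM : ∀ w, |s w| ≤ M) (hmean : ∫ w, s w ∂ν = 0) (hz : 1 ≤ z) :
    nuPlus s ν z + nuMinus s ν z ≤ (1 + M / s 1 + M / -s (-1)) * ν.real {y | z ≤ |y|} := by
  have hz0 : 0 < z := zero_lt_one.trans_le hz
  have hM0 : 0 ≤ M := (abs_nonneg _).trans (hM 0)
  have hs1 : 0 < s 1 := hs0 ▸ hmono zero_lt_one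
  have hs1' : 0 < -s (-1) := neg_pos.2 (hs0 ▸ hmono (neg_neg_of_pos zero_lt_one))
  have hplus : zetaPlus s ν z ≤ M / s 1 * ν.real (Ici z) := by
    rw [div_mul_eq_mul_div]
    exact (zetaPlus_le hmono hs0 hM hmean hz0).trans
      (div_le_div_of_nonneg_left (mul_nonneg hM0 measureReal_nonneg) hs1 (hmono.monotone hz))
  have hminus : zetaMinus s ν z ≤ M / -s (-1) * ν.real (Iic (-z)) := by
    rw [div_mul_eq_mul_div]
    exact (zetaMinus_le hmono hs0 hM hmean hz0).trans
      (div_le_div_of_nonneg_left (mul_nonneg hM0 measureReal_nonneg) hs1'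
        (neg_le_neg (hmono.monotone (neg_le_neg hz))))
  rw [measureReal_setOf_le_abs hz0]
  simp only [nuPlus, nuMinus, ← measureReal_def]
  nlinarith [mul_nonneg (div_nonneg hM0 hs1.le) (measureReal_nonneg (μ := ν) (s := Iic (-z))),
    mul_nonneg (div_nonneg hM0 hs1'.le) (measureReal_nonneg (μ := ν) (s := Ici z))]

end ScaleFunction

theorem Hp_embedding_bounded_scale_general
    (s : ℝ → ℝ) (hmono : StrictMono s) (hs0 : s 0 = 0)
    (ν : Measure ℝ) [IsProbabilityMeasure ν]
    (p : ℝ) (hp : 0 < p)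
    (hbddA : BddAbove (Set.range s)) (hbddB : BddBelow (Set.range s))
    (hmean : ∫ y, s y ∂ν = 0) :
    (∫⁻ z in Ioi (0 : ℝ), ENNReal.ofReal
        (z ^ (p - 1) * (nuPlus s ν z + nuMinus s ν z)) < ⊤) ↔
      ∫⁻ y, ENNReal.ofReal (|y| ^ p) ∂ν < ⊤ := by
  obtain ⟨M, hM⟩ := isBounded_iff_forall_norm_le.1
    (isBounded_iff_bddBelow_bddAbove.2 ⟨hbddB, hbddA⟩)
  replace hM : ∀ w, |s w| ≤ M := fun w => hM _ ⟨w, rfl⟩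
  have hC : 0 ≤ 1 + M / s 1 + M / -s (-1) := by
    have hM0 : 0 ≤ M := (abs_nonneg _).trans (hM 0)
    have hs1 : 0 < s 1 := hs0 ▸ hmono zero_lt_one
    have hs1' : 0 < -s (-1) := neg_pos.2 (hs0 ▸ hmono (neg_neg_of_pos zero_lt_one))
    positivity
  rw [lintegral_rpow_abs_lt_top_iff ν hp]
  exact lintegral_Ioi_rpow_mul_lt_top_iff_of_comparable hp hC
    (fun z hz => measureReal_le_nuPlus_add_nuMinus hmono hs0 hM hmean hz)
    (fun z hz => nuPlus_add_nuMinus_le_four hmono hs0 hz)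
    (fun z hz => nuPlus_add_nuMinus_le_mul hmono hs0 hM hmean hz.le)

/-- Theorem 5 of the paper, analytic content: if the scale function `s`
is bounded above and below and `∫ s dν = 0`, then
`∫_0^∞ z^{p-1}(ν₊(z)+ν₋(z)) dz < ∞` if and only if `ν` has a finite `p`-th moment. -/
theorem Hp_embedding_bounded_scale
    (s : ℝ → ℝ) (hs : Continuous s) (hmono : StrictMono s) (hs0 : s 0 = 0)
    (ν : Measure ℝ) [IsProbabilityMeasure ν] (hν0 : ν {0} = 0)
    (p : ℝ) (hp : 0 < p)
    (hbddA : BddAbove (Set.range s)) (hbddB : BddBelow (Set.range s))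
    (hmean : ∫ y, s y ∂ν = 0) :
    (∫⁻ z in Ioi (0 : ℝ), ENNReal.ofReal
        (z ^ (p - 1) * (nuPlus s ν z + nuMinus s ν z)) < ⊤) ↔
      ∫⁻ y, ENNReal.ofReal (|y| ^ p) ∂ν < ⊤ :=
  Hp_embedding_bounded_scale_general s hmono hs0 ν p hp hbddA hbddB hmean
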